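/- arXiv:1707.08744 — 2 statements merged into one kernel-verified Lean document; each statement's English description precedes it below -/
import Mathlib

section
/- Incompleteness of CN for epistemic weight models: the Sure Thing formula B_a(p,q) ∧ B_a(¬p,q) → B_a(⊤,q) (for a propositional letters p,q and an agent a) is valid on all epistemic weight models but is not derivable in the CN calculus; hence the CN calculus is sound but not complete with respect to epistemic weight models. -/
/-- The language L_CN: `φ ::= ⊤ | p | ¬φ | (φ∧φ) | B_a(φ,φ)`. -/
inductive CNForm (Agt Prp : Type) : Type
  | top : CNForm Agt Prp
  | atom : Prp → CNForm Agt Prp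
  | neg : CNForm Agt Prp → CNForm Agt Prp
  | and : CNForm Agt Prp → CNForm Agt Prp → CNForm Agt Prp
  | bel : Agt → CNForm Agt Prp → CNForm Agt Prp → CNForm Agt Prp
namespace CNForm

/-- Material implication, defined from `¬` and `∧`. -/
def imp {Agt Prp : Type} (φ ψ : CNForm Agt Prp) : CNForm Agt Prp := .neg (.and φ (.neg ψ))

/-- Disjunction, defined from `¬` and `∧`. -/
def or {Agt Prp : Type} (φ ψ : CNForm Agt Prp) : CNForm Agt Prp := .neg (.and (.neg φ) (.neg ψ))

/-- Biconditional. -/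
def iff {Agt Prp : Type} (φ ψ : CNForm Agt Prp) : CNForm Agt Prp := .and (imp φ ψ) (imp ψ φ)

/-- Knowledge: `K_a φ := ¬B_a(¬φ,⊤)`. -/
def K {Agt Prp : Type} (a : Agt) (φ : CNForm Agt Prp) : CNForm Agt Prp := .neg (.bel a (.neg φ) .top)

end CNForm

/-- Boolean evaluation of a formula under an assignment `v` of truth values to
the "atomic" formulas (proposition letters and belief formulas), interpreting
`⊤`, `¬`, `∧` classically. -/
def boolEval {Agt Prp : Type} (v : CNForm Agt Prp → Prop) : CNForm Agt Prp → Prop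
  | .top => True
  | .atom p => v (.atom p)
  | .neg φ => ¬ boolEval v φ
  | .and φ ψ => boolEval v φ ∧ boolEval v ψ
  | .bel a φ ψ => v (.bel a φ ψ)

/-- `φ` is an instance of a propositional tautology: it evaluates to true under
every assignment of truth values to proposition letters and belief formulas. -/
def CNTaut {Agt Prp : Type} (φ : CNForm Agt Prp) : Prop := ∀ v, boolEval v φ

/-- The CN calculus. -/
inductive CNDeriv {Agt Prp : Type} : CNForm Agt Prp → Prop
  | taut {φ : CNForm Agt Prp} : CNTaut φ → CNDeriv φ
  | distK (a : Agt) (φ ψ : CNForm Agt Prp) :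
      CNDeriv ((CNForm.K a (φ.imp ψ)).imp ((CNForm.K a φ).imp (CNForm.K a ψ)))
  | tAx (a : Agt) (φ : CNForm Agt Prp) : CNDeriv ((CNForm.K a φ).imp φ)
  | fiveB (a : Agt) (φ ψ : CNForm Agt Prp) :
      CNDeriv ((CNForm.bel a φ ψ).imp (CNForm.K a (.bel a φ ψ)))
  | fourB (a : Agt) (φ ψ : CNForm Agt Prp) :
      CNDeriv ((CNForm.neg (.bel a φ ψ)).imp (CNForm.K a (.neg (.bel a φ ψ))))
  | dAx (a : Agt) (φ ψ : CNForm Agt Prp) :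
      CNDeriv ((CNForm.bel a φ ψ).imp (.neg (.bel a φ (.neg ψ))))
  | ecAx (a : Agt) (φ ψ χ : CNForm Agt Prp) :
      CNDeriv ((CNForm.K a (φ.iff ψ)).imp ((CNForm.bel a φ χ).imp (.bel a ψ χ)))
  | mAx (a : Agt) (φ ψ χ : CNForm Agt Prp) :
      CNDeriv ((CNForm.K a (φ.imp ψ)).imp ((CNForm.bel a χ φ).imp (.bel a χ ψ)))
  | cAx (a : Agt) (φ ψ : CNForm Agt Prp) :
      CNDeriv ((CNForm.bel a φ ψ).imp (.bel a φ (.and φ ψ)))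
  | scAx (a : Agt) (φ ψ χ : CNForm Agt Prp) :
      CNDeriv (((CNForm.neg (.bel a χ (.neg φ))).and
          (.neg (CNForm.K a (.neg (χ.and ((CNForm.neg φ).and ψ)))))).imp
        (.bel a χ (φ.or ψ)))
  | mp {φ ψ : CNForm Agt Prp} : CNDeriv (φ.imp ψ) → CNDeriv φ → CNDeriv ψ
  | necK {φ : CNForm Agt Prp} (a : Agt) : CNDeriv φ → CNDeriv (CNForm.K a φ)

/-- An epistemic weight model `(W, ∼, L, V)`: `W` nonempty countable, `∼_a`
equivalence relations, `L_a : W → ℚ` positive with summable weights on each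
knowledge cell, `V` a valuation. -/
structure WeightModel (Agt Prp W : Type) : Type where
  nonempty : Nonempty W
  countable : Countable W
  sim : Agt → W → W → Prop
  equiv : ∀ a, Equivalence (sim a)
  wt : Agt → W → ℚ
  wt_pos : ∀ a w, 0 < wt a w
  wt_summable : ∀ a w, Summable (fun u : {v // sim a w v} => ((wt a u.1 : ℚ) : ℝ))
  V : Prp → Set W

/-- Truth of an L_CN formula in an epistemic weight model:
`B_a(φ,ψ)` holds at `w` iff the total weight of `[w]_a ∩ ⟦φ∧ψ⟧` strictly
exceeds the total weight of `[w]_a ∩ ⟦φ∧¬ψ⟧`. -/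
def WeightModel.truth {Agt Prp W : Type} (M : WeightModel Agt Prp W) :
    CNForm Agt Prp → W → Prop
  | .top, _ => True
  | .atom p, w => w ∈ M.V p
  | .neg φ, w => ¬ M.truth φ w
  | .and φ ψ, w => M.truth φ w ∧ M.truth ψ w
  | .bel a φ ψ, w =>
      (∑' u : {v // M.sim a w v ∧ M.truth φ v ∧ M.truth ψ v}, ((M.wt a u.1 : ℚ) : ℝ)) >
      (∑' u : {v // M.sim a w v ∧ M.truth φ v ∧ ¬ M.truth ψ v}, ((M.wt a u.1 : ℚ) : ℝ))

/-!
On a weight model, `B_a` compares total weights, and total weight is additive: the weights of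
`[w]_a ∩ ⟦q⟧` and `[w]_a ∩ ⟦¬q⟧` split along `p`, so the two strict inequalities behind
`B_a(p,q)` and `B_a(¬p,q)` add up to the one behind `B_a(⊤,q)`. The CN axioms, however, only
use that the comparison of sets is strictly monotone: CN is sound for single-cell models in which
`B_a` compares an arbitrary strictly monotone set function, and a non-additive one on four worlds
refutes the Sure Thing formula.
-/

def sureThing {Agt Prp : Type} (a : Agt) (φ ψ : CNForm Agt Prp) : CNForm Agt Prp :=
  CNForm.imp (.and (.bel a φ ψ) (.bel a (.neg φ) ψ)) (.bel a .top ψ)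

/-- The `True ∧` matches the truth clause of `B_a(⊤, ψ)`. -/
theorem tsum_subtype_and_eq_add {W α : Type*} [AddCommGroup α] [UniformSpace α]
    [IsUniformAddGroup α] [CompleteSpace α] [T2Space α] {f : W → α} {C : W → Prop}
    (hf : Summable fun u : {v // C v} => f u) (P Q : W → Prop) :
    ∑' u : {v // C v ∧ True ∧ Q v}, f u =
      ∑' u : {v // C v ∧ P v ∧ Q v}, f u + ∑' u : {v // C v ∧ ¬P v ∧ Q v}, f u := by
  have summable_within (R : W → Prop) : Summable fun u : {v // C v ∧ R v} => f u :=
    hf.comp_injective (i := fun u : {v // C v ∧ R v} => (⟨u.1, u.2.1⟩ : {v // C v}))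
      fun u v h => Subtype.ext (congrArg Subtype.val h :)
  have hsplit : {v | C v ∧ True ∧ Q v} = {v | C v ∧ P v ∧ Q v} ∪ {v | C v ∧ ¬P v ∧ Q v} := by
    ext v; simp only [Set.mem_ofPred_eq, Set.mem_union]; tauto
  have hdisj : Disjoint {v | C v ∧ P v ∧ Q v} {v | C v ∧ ¬P v ∧ Q v} :=
    Set.disjoint_left.2 fun v hP hnP => hnP.2.1 hP.2.1
  change ∑' u : ↥{v | C v ∧ True ∧ Q v}, f u = _
  rw [hsplit]
  exact (summable_within _).tsum_union_disjoint hdisj (summable_within _)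

theorem WeightModel.truth_sureThing {Agt Prp W : Type} (M : WeightModel Agt Prp W) (a : Agt)
    (φ ψ : CNForm Agt Prp) (w : W) : M.truth (sureThing a φ ψ) w := by
  simp only [sureThing, CNForm.imp, WeightModel.truth]
  rintro ⟨⟨hφ, hnφ⟩, hnot⟩
  apply hnot
  have split (Q : W → Prop) :=
    tsum_subtype_and_eq_add (f := fun v => (M.wt a v : ℝ)) (M.wt_summable a w) (M.truth φ) Q
  rw [split (M.truth ψ), split fun v => ¬M.truth ψ v]
  exact add_lt_add hφ hnφ

theorem StrictMono.apply_empty_lt_iff {X β : Type*} [Preorder β] {ν : Set X → β}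
    (hν : StrictMono ν) {A : Set X} : ν ∅ < ν A ↔ A.Nonempty :=
  ⟨fun h => Set.nonempty_iff_ne_empty.2 (by rintro rfl; exact lt_irrefl _ h),
    fun h => hν h.empty_ssubset⟩

section Capacity

variable {Agt Prp : Type} {X β : Type*}

/-- Truth in a capacity model with a single knowledge cell `X`: agent `a` compares the
sets `⟦φ∧ψ⟧` and `⟦φ∧¬ψ⟧` through an arbitrary set function `ν a`, not necessarily additive. -/
def capTruth [LT β] (ν : Agt → Set X → β) (V : Prp → Set X) : CNForm Agt Prp → X → Prop
  | .top, _ => True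
  | .atom r, x => x ∈ V r
  | .neg φ, x => ¬capTruth ν V φ x
  | .and φ ψ, x => capTruth ν V φ x ∧ capTruth ν V ψ x
  | .bel a φ ψ, _ =>
      ν a {y | capTruth ν V φ y ∧ ¬capTruth ν V ψ y} <
        ν a {y | capTruth ν V φ y ∧ capTruth ν V ψ y}

variable {ν : Agt → Set X → β} {V : Prp → Set X}

@[simp]
theorem capTruth_imp [LT β] (φ ψ : CNForm Agt Prp) (x : X) :
    capTruth ν V (φ.imp ψ) x ↔ (capTruth ν V φ x → capTruth ν V ψ x) := by
  simp [CNForm.imp, capTruth]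

@[simp]
theorem capTruth_or [LT β] (φ ψ : CNForm Agt Prp) (x : X) :
    capTruth ν V (φ.or ψ) x ↔ (capTruth ν V φ x ∨ capTruth ν V ψ x) := by
  simp [CNForm.or, capTruth, or_iff_not_and_not]

@[simp]
theorem capTruth_iff [LT β] (φ ψ : CNForm Agt Prp) (x : X) :
    capTruth ν V (φ.iff ψ) x ↔ (capTruth ν V φ x ↔ capTruth ν V ψ x) := by
  simp [CNForm.iff, capTruth, iff_iff_implies_and_implies]

theorem capTruth_K [Preorder β] (hν : ∀ a, StrictMono (ν a)) (a : Agt) (φ : CNForm Agt Prp) (x : X) :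
    capTruth ν V (CNForm.K a φ) x ↔ ∀ y, capTruth ν V φ y := by
  simp only [CNForm.K, capTruth, not_true, and_false, Set.ofPred_false, and_true,
    (hν a).apply_empty_lt_iff, Set.not_nonempty_iff_eq_empty, Set.eq_empty_iff_forall_notMem,
    Set.mem_ofPred_eq, not_not]

theorem boolEval_capTruth [LT β] (x : X) (φ : CNForm Agt Prp) :
    boolEval (fun ψ => capTruth ν V ψ x) φ ↔ capTruth ν V φ x := by
  induction φ <;> simp_all [boolEval, capTruth]

theorem capTruth_bel_congr_left [LT β] {a : Agt} {φ φ' : CNForm Agt Prp} (ψ : CNForm Agt Prp) (x : X)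
    (h : ∀ y, capTruth ν V φ y ↔ capTruth ν V φ' y) :
    capTruth ν V (.bel a φ ψ) x ↔ capTruth ν V (.bel a φ' ψ) x := by
  simp only [capTruth, h]

theorem capTruth_bel_mono [Preorder β] (hν : ∀ a, Monotone (ν a)) {a : Agt} {χ φ ψ : CNForm Agt Prp} (x : X)
    (h : ∀ y, capTruth ν V χ y → capTruth ν V φ y → capTruth ν V ψ y)
    (hφ : capTruth ν V (.bel a χ φ) x) : capTruth ν V (.bel a χ ψ) x :=
  calc ν a {y | capTruth ν V χ y ∧ ¬capTruth ν V ψ y}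
      _ ≤ ν a {y | capTruth ν V χ y ∧ ¬capTruth ν V φ y} :=
        hν a fun y hy => ⟨hy.1, mt (h y hy.1) hy.2⟩
      _ < ν a {y | capTruth ν V χ y ∧ capTruth ν V φ y} := hφ
      _ ≤ ν a {y | capTruth ν V χ y ∧ capTruth ν V ψ y} :=
        hν a fun y hy => ⟨hy.1, h y hy.1 hy.2⟩

theorem capTruth_bel_or [LinearOrder β] (hν : ∀ a, StrictMono (ν a)) {a : Agt} {χ φ ψ : CNForm Agt Prp} (x : X)
    (hφ : ¬capTruth ν V (.bel a χ (.neg φ)) x)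
    {z : X} (hz : capTruth ν V χ z ∧ ¬capTruth ν V φ z ∧ capTruth ν V ψ z) :
    capTruth ν V (.bel a χ (φ.or ψ)) x := by
  simp only [capTruth, not_not, not_lt] at hφ
  set A := {y | capTruth ν V χ y ∧ capTruth ν V φ y}
  calc ν a {y | capTruth ν V χ y ∧ ¬capTruth ν V (φ.or ψ) y}
      _ ≤ ν a {y | capTruth ν V χ y ∧ ¬capTruth ν V φ y} :=
        (hν a).monotone fun y hy => ⟨hy.1, fun h => hy.2 ((capTruth_or φ ψ y).2 (.inl h))⟩
      _ ≤ ν a A := hφ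
      _ < ν a (insert z A) := hν a (Set.ssubset_insert fun hzA => hz.2.1 hzA.2)
      _ ≤ ν a {y | capTruth ν V χ y ∧ capTruth ν V (φ.or ψ) y} := by
        refine (hν a).monotone (Set.insert_subset ⟨hz.1, ?_⟩ fun y hy => ⟨hy.1, ?_⟩)
        · exact (capTruth_or φ ψ z).2 (.inr hz.2.2)
        · exact (capTruth_or φ ψ y).2 (.inl hy.2)

theorem capTruth_of_cnDeriv [LinearOrder β] (hν : ∀ a, StrictMono (ν a)) {φ : CNForm Agt Prp}
    (h : CNDeriv φ) (x : X) : capTruth ν V φ x := by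
  induction h generalizing x with
  | taut hφ => exact (boolEval_capTruth x _).1 (hφ _)
  | distK a φ ψ => simp only [capTruth_imp, capTruth_K hν]; exact fun h hφ y => h y (hφ y)
  | tAx a φ => simp only [capTruth_imp, capTruth_K hν]; exact fun h => h x
  | fiveB a φ ψ | fourB a φ ψ => simp only [capTruth_imp, capTruth_K hν]; exact fun h _ => h
  | dAx a φ ψ => simp only [capTruth_imp, capTruth, not_not]; exact lt_asymm
  | ecAx a φ ψ χ =>
    simp only [capTruth_imp, capTruth_K hν, capTruth_iff]
    exact fun h => (capTruth_bel_congr_left χ x h).1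
  | mAx a φ ψ χ =>
    simp only [capTruth_imp, capTruth_K hν]
    exact fun h => capTruth_bel_mono (fun a => (hν a).monotone) x fun y _ => h y
  | cAx a φ ψ =>
    rw [capTruth_imp]
    exact capTruth_bel_mono (fun a => (hν a).monotone) x fun y hφ hψ => ⟨hφ, hψ⟩
  | scAx a φ ψ χ =>
    rw [capTruth_imp]
    rintro ⟨hφ, hK⟩
    obtain ⟨z, hz⟩ : ∃ z, capTruth ν V χ z ∧ ¬capTruth ν V φ z ∧ capTruth ν V ψ z := by
      simpa [capTruth_K hν, capTruth] using hK
    exact capTruth_bel_or hν x hφ hz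
  | mp _ _ ihφψ ihφ => exact (capTruth_imp _ _ x).1 (ihφψ x) (ihφ x)
  | necK a _ ih => exact (capTruth_K hν a _ x).2 ih

end Capacity

theorem strictMono_sum_indicator {X M : Type*} [Fintype X] [AddCommMonoid M] [PartialOrder M]
    [IsOrderedCancelAddMonoid M] {w : X → M} (hw : ∀ x, 0 < w x) :
    StrictMono fun A : Set X => ∑ x, A.indicator w x := by
  intro A B hAB
  obtain ⟨z, hzB, hzA⟩ := Set.exists_of_ssubset hAB
  refine Finset.sum_lt_sum (fun x _ => Set.indicator_le_indicator_of_subset hAB.subset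
    (fun x => (hw x).le) x) ⟨z, Finset.mem_univ z, ?_⟩
  simpa [hzA, hzB] using hw z

open Classical in
/-- With `p` true at `{0, 2}` and `q` at `{0, 1}`, both halves `p` and `¬p` favour `q` (`3 > 2`),
yet the bonus makes `{2, 3}` outweigh `{0, 1}` (`7 > 6`). -/
noncomputable def sureThingCapacity (A : Set (Fin 4)) : ℕ :=
  ∑ x, A.indicator ![3, 3, 2, 2] x + if {2, 3} ⊆ A then 3 else 0

theorem strictMono_sureThingCapacity : StrictMono sureThingCapacity :=
  (strictMono_sum_indicator (by decide)).add_monotone fun A B hAB => by split_ifs <;> grind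

open Classical in
theorem not_capTruth_sureThing {Agt Prp : Type} (a : Agt) {p q : Prp} (hpq : p ≠ q) (x : Fin 4) :
    ¬capTruth (fun _ : Agt => sureThingCapacity) (fun r => if r = p then {0, 2} else {0, 1})
      (sureThing a (.atom p) (.atom q)) x := by
  simp [sureThing, capTruth, hpq.symm, sureThingCapacity, Fin.sum_univ_four,
    Set.insert_subset_iff]

theorem not_cnDeriv_sureThing {Agt Prp : Type} (a : Agt) {p q : Prp} (hpq : p ≠ q) :
    ¬CNDeriv (sureThing a (.atom p) (.atom q)) := fun h =>
  not_capTruth_sureThing a hpq 0 <| capTruth_of_cnDeriv (fun _ => strictMono_sureThingCapacity) h 0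

theorem cn_incomplete_for_weight_general {Agt Prp : Type}
    (a : Agt) (p q : Prp) (hpq : p ≠ q) :
    (∀ (W : Type) (M : WeightModel Agt Prp W) (w : W),
        M.truth
          (CNForm.imp (.and (.bel a (.atom p) (.atom q)) (.bel a (.neg (.atom p)) (.atom q)))
            (.bel a .top (.atom q))) w) ∧
    ¬ CNDeriv
        (CNForm.imp (.and (.bel a (.atom p) (.atom q)) (.bel a (.neg (.atom p)) (.atom q)))
          (.bel a .top (.atom q))) :=
  ⟨fun _ M w => M.truth_sureThing a _ _ w, not_cnDeriv_sureThing a hpq⟩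

/-- Incompleteness of CN for epistemic weight models: the Sure Thing formula
`B_a(p,q) ∧ B_a(¬p,q) → B_a(⊤,q)` is valid on all epistemic weight models but
not derivable in the CN calculus. -/
theorem cn_incomplete_for_weight {Agt Prp : Type} [Finite Agt]
    (a : Agt) (p q : Prp) (hpq : p ≠ q) :
    (∀ (W : Type) (M : WeightModel Agt Prp W) (w : W),
        M.truth
          (CNForm.imp (.and (.bel a (.atom p) (.atom q)) (.bel a (.neg (.atom p)) (.atom q)))
            (.bel a .top (.atom q))) w) ∧
    ¬ CNDeriv
        (CNForm.imp (.and (.bel a (.atom p) (.atom q)) (.bel a (.neg (.atom p)) (.atom q)))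
          (.bel a .top (.atom q))) :=
  cn_incomplete_for_weight_general a p q hpq
end

section
/- Closure of conditional neighbourhood models under link-cutting update: let M = (W, N, V) be a conditional neighbourhood model and A ⊆ W. Define, for each agent a and w ∈ W, [w]^A_a := [w]_a ∩ A if w ∈ A and [w]^A_a := [w]_a \ A if w ∉ A, and define N'_a^w(X) := N_a^w(X ∩ [w]^A_a) for all X ⊆ W. Then M' = (W, N', V) is again a conditional neighbourhood model, and its derived equivalence classes satisfy {v ∈ W | ∀ X ⊆ W, N'_a^w(X) = N'_a^v(X)} = [w]^A_a for every agent a and w ∈ W. -/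
/-- The knowledge cell of agent `a` at world `w`, derived from the
conditional neighbourhood function `N`:
`[w]_a = {v | ∀ X ⊆ W, N_a^w(X) = N_a^v(X)}`. -/
def cellOf {Agt W : Type} (N : Agt → W → Set W → Set (Set W)) (a : Agt) (w : W) : Set W :=
  {v | ∀ X : Set W, N a w X = N a v X}

/-- A conditional neighbourhood model `(W, N, V)`. -/
structure CNModel (Agt Prp W : Type) : Type where
  nonempty : Nonempty W
  N : Agt → W → Set W → Set (Set W)
  V : Prp → Set W
  cond_c : ∀ a w X, ∀ Y ∈ N a w X, Y ⊆ X ∩ cellOf N a w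
  cond_ec : ∀ a w (X Y : Set W), X ∩ cellOf N a w = Y ∩ cellOf N a w → N a w X = N a w Y
  cond_d : ∀ a w X, ∀ Y ∈ N a w X, (X ∩ cellOf N a w) \ Y ∉ N a w X
  cond_sc : ∀ a w (X Y Z : Set W), Y ⊆ X ∩ cellOf N a w → Z ⊆ X ∩ cellOf N a w →
      (X ∩ cellOf N a w) \ Y ∉ N a w X → Y ⊂ Z → Z ∈ N a w X

/-! Link-cutting splits each cell `[w]_a` into blocks, the block `C a w` of `w` containing `w`.
Restricting the neighbourhoods to these blocks, `N'_a^w(X) = N_a^w(X ∩ C a w)`,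
preserves the conditions because `X ∩ C a w` already lies inside `[w]_a`. The new cell of `w` is
recovered from the new neighbourhoods of the whole space: `C a w` is the largest member of
`N_a^w(C a w)`, so worlds with the same new neighbourhoods must lie in the same block. -/

namespace CNModel

variable {Agt Prp W : Type}

lemma mem_cellOf_self (N : Agt → W → Set W → Set (Set W)) (a : Agt) (w : W) :
    w ∈ cellOf N a w :=
  fun _ => rfl

lemma cellOf_eq_of_mem {N : Agt → W → Set W → Set (Set W)} {a : Agt} {w v : W}
    (h : v ∈ cellOf N a w) : cellOf N a v = cellOf N a w := by
  ext u
  exact forall_congr' fun X => by rw [h X]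

lemma self_mem_N_of_subset_cellOf (M : CNModel Agt Prp W) {a : Agt} {w : W} {S : Set W}
    (hS : S ⊆ cellOf M.N a w) (hne : S.Nonempty) : S ∈ M.N a w S := by
  have hcell : S ∩ cellOf M.N a w = S := Set.inter_eq_self_of_subset_left hS
  by_contra hnot
  refine hnot (M.cond_sc a w S ∅ S (Set.empty_subset _) hcell.ge ?_ hne.empty_ssubset)
  rwa [hcell, Set.sdiff_empty]

structure IsCellRefinement (N : Agt → W → Set W → Set (Set W)) (C : Agt → W → Set W) : Prop where
  subset_cellOf : ∀ a w, C a w ⊆ cellOf N a w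
  mem_self : ∀ a w, w ∈ C a w
  eq_of_mem : ∀ a w v, v ∈ C a w → C a v = C a w

section Refinement

variable (M : CNModel Agt Prp W) {C : Agt → W → Set W} (hC : IsCellRefinement M.N C)
include hC

lemma inter_block_inter_cellOf (a : Agt) (w : W) (X : Set W) :
    X ∩ C a w ∩ cellOf M.N a w = X ∩ C a w := by
  rw [Set.inter_assoc, Set.inter_eq_self_of_subset_left (hC.subset_cellOf a w)]

lemma cellOf_restrict (a : Agt) (w : W) :
    cellOf (fun a w X => M.N a w (X ∩ C a w)) a w = C a w := by
  ext v
  constructor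
  · intro hv
    have huniv : M.N a w (C a w) = M.N a v (C a v) := by
      simpa only [Set.univ_inter] using hv Set.univ
    have hw : C a w ∈ M.N a v (C a v) := huniv ▸
      M.self_mem_N_of_subset_cellOf (hC.subset_cellOf a w) ⟨w, hC.mem_self a w⟩
    have hwv : w ∈ C a v :=
      (M.cond_c a v _ _ hw).trans Set.inter_subset_left (hC.mem_self a w)
    rw [hC.eq_of_mem a v w hwv]
    exact hC.mem_self a v
  · intro hv X
    have hN : M.N a w = M.N a v := funext (hC.subset_cellOf a w hv)
    simp only [hN, hC.eq_of_mem a w v hv]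

def restrict : CNModel Agt Prp W where
  nonempty := M.nonempty
  N a w X := M.N a w (X ∩ C a w)
  V := M.V
  cond_c a w X Y hY := by
    rw [cellOf_restrict M hC, ← inter_block_inter_cellOf M hC]
    exact M.cond_c a w _ Y hY
  cond_ec a w X Y hXY := by
    rw [cellOf_restrict M hC] at hXY
    simp only [hXY]
  cond_d a w X Y hY := by
    rw [cellOf_restrict M hC]
    simpa only [inter_block_inter_cellOf M hC] using M.cond_d a w _ Y hY
  cond_sc a w X Y Z hY hZ hnot hYZ := by
    rw [cellOf_restrict M hC] at hY hZ hnot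
    refine M.cond_sc a w _ Y Z ?_ ?_ ?_ hYZ <;> rwa [inter_block_inter_cellOf M hC]

end Refinement

open Classical in
def linkCutCell (N : Agt → W → Set W → Set (Set W)) (A : Set W) (a : Agt) (w : W) : Set W :=
  if w ∈ A then cellOf N a w ∩ A else cellOf N a w \ A

lemma isCellRefinement_linkCutCell (N : Agt → W → Set W → Set (Set W)) (A : Set W) :
    IsCellRefinement N (linkCutCell N A) where
  subset_cellOf a w := by
    unfold linkCutCell
    split_ifs
    exacts [Set.inter_subset_left, Set.sdiff_subset]
  mem_self a w := by
    unfold linkCutCell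
    split_ifs with hw <;> exact ⟨mem_cellOf_self N a w, hw⟩
  eq_of_mem a w v hv := by
    unfold linkCutCell at hv ⊢
    by_cases hw : w ∈ A
    · rw [if_pos hw] at hv
      rw [if_pos hw, if_pos hv.2, cellOf_eq_of_mem hv.1]
    · rw [if_neg hw] at hv
      rw [if_neg hw, if_neg hv.2, cellOf_eq_of_mem hv.1]

end CNModel

open Classical in
/-- Closure of conditional neighbourhood models under link-cutting update by a
set `A` of worlds: with `[w]^A_a := [w]_a ∩ A` if `w ∈ A` and `[w]_a \ A`
otherwise, the update `N'_a^w(X) := N_a^w(X ∩ [w]^A_a)` yields again a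
conditional neighbourhood model, whose derived cells are exactly the `[w]^A_a`. -/
theorem cn_link_cut_closed {Agt Prp W : Type} (M : CNModel Agt Prp W) (A : Set W) :
    ∃ M' : CNModel Agt Prp W,
      M'.N = (fun a w X =>
        M.N a w (X ∩ (if w ∈ A then cellOf M.N a w ∩ A else cellOf M.N a w \ A))) ∧
      M'.V = M.V ∧
      ∀ (a : Agt) (w : W),
        cellOf M'.N a w = (if w ∈ A then cellOf M.N a w ∩ A else cellOf M.N a w \ A) := by
  have hC := CNModel.isCellRefinement_linkCutCell M.N A
  exact ⟨M.restrict hC, rfl, rfl, CNModel.cellOf_restrict M hC⟩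
end
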